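/- arXiv:1510.08158 — 2 statements merged into one kernel-verified Lean document; each statement's English description precedes it below -/
import Mathlib

section
/- If a periodic wave in 𝒲 satisfies u_x < 0 at every point of Ω⁺ ∪ S⁺, then the maximum of |v/u| over the closure of Ω is strictly less than 1. -/
open Set

/-- Partial derivative in the horizontal direction. -/
noncomputable def pdX (f : ℝ × ℝ → ℝ) (p : ℝ × ℝ) : ℝ := fderiv ℝ f p (1, 0)

/-- Partial derivative in the vertical direction. -/
noncomputable def pdY (f : ℝ × ℝ → ℝ) (p : ℝ × ℝ) : ℝ := fderiv ℝ f p (0, 1)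

/-- A symmetric `2L`-periodic steady gravity water wave with vorticity, in the frame
moving with the wave.  The fluid occupies `Ω = {(x,y) : -L < x < L, -d < y < η x}`;
`u, v` are the relative velocity components, `P` is the pressure, `η` the surface
profile, `ψ` the stream function and `γ` the vorticity function. -/
structure PeriodicWave (g Patm L : ℝ) : Type where
  u : ℝ × ℝ → ℝ
  v : ℝ × ℝ → ℝ
  P : ℝ × ℝ → ℝ
  η : ℝ → ℝ
  ψ : ℝ × ℝ → ℝ
  γ : ℝ → ℝ
  d : ℝ
  m : ℝ
  d_pos : 0 < d
  m_pos : 0 < m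
  u_smooth : ContDiff ℝ 3 u
  v_smooth : ContDiff ℝ 3 v
  P_smooth : ContDiff ℝ 3 P
  η_smooth : ContDiff ℝ 4 η
  ψ_smooth : ContDiff ℝ 4 ψ
  γ_smooth : ContDiffOn ℝ 2 γ (Icc 0 m)
  u_periodic : ∀ x y, u (x + 2 * L, y) = u (x, y)
  v_periodic : ∀ x y, v (x + 2 * L, y) = v (x, y)
  P_periodic : ∀ x y, P (x + 2 * L, y) = P (x, y)
  η_periodic : ∀ x, η (x + 2 * L) = η x
  η_mean : (∫ x in (-L)..L, η x) = 0
  u_even : ∀ x y, u (-x, y) = u (x, y)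
  v_odd : ∀ x y, v (-x, y) = -v (x, y)
  P_even : ∀ x y, P (-x, y) = P (x, y)
  η_even : ∀ x, η (-x) = η x
  euler_x : ∀ x y, -d < y → y < η x →
    u (x, y) * pdX u (x, y) + v (x, y) * pdY u (x, y) = -pdX P (x, y)
  euler_y : ∀ x y, -d < y → y < η x →
    u (x, y) * pdX v (x, y) + v (x, y) * pdY v (x, y) = -(pdY P (x, y)) - g
  incompressible : ∀ x y, -d < y → y < η x → pdX u (x, y) + pdY v (x, y) = 0
  surface_pressure : ∀ x, P (x, η x) = Patm
  surface_kinematic : ∀ x, v (x, η x) = deriv η x * u (x, η x)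
  bed_kinematic : ∀ x, v (x, -d) = 0
  nonstagnant : ∃ δ > 0, ∀ x y, -d ≤ y → y ≤ η x → u (x, y) ≤ -δ
  psi_x : ∀ x y, -d ≤ y → y ≤ η x → pdX ψ (x, y) = -v (x, y)
  psi_y : ∀ x y, -d ≤ y → y ≤ η x → pdY ψ (x, y) = u (x, y)
  psi_surface : ∀ x, ψ (x, η x) = 0
  psi_bed : ∀ x, ψ (x, -d) = m
  vorticity_eq : ∀ x y, -d < y → y < η x → pdX v (x, y) - pdY u (x, y) = γ (ψ (x, y))

namespace PeriodicWave

variable {g Patm L : ℝ}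

/-- The closure of one period `Ω` of the fluid domain. -/
def Ωbar (W : PeriodicWave g Patm L) : Set (ℝ × ℝ) :=
  {p | -L ≤ p.1 ∧ p.1 ≤ L ∧ -W.d ≤ p.2 ∧ p.2 ≤ W.η p.1}

/-- The open half period `Ω⁺` of the fluid domain. -/
def Ωplus (W : PeriodicWave g Patm L) : Set (ℝ × ℝ) :=
  {p | 0 < p.1 ∧ p.1 < L ∧ -W.d < p.2 ∧ p.2 < W.η p.1}

/-- The half period `S⁺` of the free surface. -/
def Splus (W : PeriodicWave g Patm L) : Set (ℝ × ℝ) :=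
  {p | 0 < p.1 ∧ p.1 < L ∧ p.2 = W.η p.1}

/-- A wave is trivial if `u, v, P, η` depend only on `y`. -/
def IsTrivial (W : PeriodicWave g Patm L) : Prop :=
  (∀ p, W.v p = 0) ∧ (∀ x, W.η x = 0) ∧
    (∀ x x' y, W.u (x, y) = W.u (x', y)) ∧ (∀ x x' y, W.P (x, y) = W.P (x', y))

/-- The streamline monotonicity condition `v > 0` on `Ω⁺ ∪ S⁺`. -/
def MonotoneHalf (W : PeriodicWave g Patm L) : Prop :=
  ∀ p ∈ W.Ωplus ∪ W.Splus, 0 < W.v p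

/-- Membership in the water-wave set 𝒲 : the vorticity function satisfies
`γ ≤ 0`, `γ' ≤ 0`, `γ'' ≤ 0` on `[0, m]`, and the wave is either trivial or
monotone. -/
def MemW (W : PeriodicWave g Patm L) : Prop :=
  (∀ s ∈ Icc (0:ℝ) W.m, W.γ s ≤ 0) ∧
  (∀ s ∈ Icc (0:ℝ) W.m, derivWithin W.γ (Icc 0 W.m) s ≤ 0) ∧
  (∀ s ∈ Icc (0:ℝ) W.m, derivWithin (derivWithin W.γ (Icc 0 W.m)) (Icc 0 W.m) s ≤ 0) ∧
  (W.IsTrivial ∨ W.MonotoneHalf)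

/-- The trace of `(u, v, u_x, v_x, u_y, u_xx, u_xy)` on the free surface. -/
noncomputable def trace (W : PeriodicWave g Patm L) (x : ℝ) :
    ℝ × ℝ × ℝ × ℝ × ℝ × ℝ × ℝ :=
  (W.u (x, W.η x), W.v (x, W.η x), pdX W.u (x, W.η x), pdX W.v (x, W.η x),
    pdY W.u (x, W.η x), pdX (pdX W.u) (x, W.η x), pdY (pdX W.u) (x, W.η x))

end PeriodicWave

/-!
For a trivial wave `v ≡ 0`. Otherwise `f = u + v` satisfies `Δf = -γ'(ψ) f` in the fluid with
`-γ' ≥ 0`, so by the weak maximum principle (run with the perturbations `f + ε e^{α y}`,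
`α² > max (-γ')`) a nonnegative maximum of `f` over the closure of `Ω⁺` is attained on its
boundary. It cannot be: on the crest and trough lines and on the bed `v = 0`, so `f = u < 0`;
on `S⁺` the Euler equations, the boundary conditions, `γ(0) ≤ 0` and `u_x < 0` exclude it.
Hence `0 ≤ v < -u` on the closure of `Ω⁺`, by symmetry `|v / u| < 1` on the closure of `Ω`,
and compactness turns this into a bound `c < 1`.
-/

open Filter Topology

lemma IsLocalMax.deriv_deriv_nonpos {f : ℝ → ℝ} {a : ℝ} (h : IsLocalMax f a)
    (hc : ContinuousAt f a) : deriv (deriv f) a ≤ 0 := by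
  by_contra! hpos
  -- `a` would also be a local minimum, so `f` would be locally constant.
  have hmin := isLocalMin_of_deriv_deriv_pos hpos h.deriv_eq_zero hc
  have hconst : f =ᶠ[𝓝 a] fun _ => f a := by
    filter_upwards [h, hmin] with x hmax hmin' using le_antisymm hmax hmin'
  simp [hconst.deriv.deriv_eq] at hpos

lemma IsLocalMax.fderiv_fderiv_apply_nonpos {E : Type*} [NormedAddCommGroup E]
    [NormedSpace ℝ E] {F : E → ℝ} {q : E} (h : IsLocalMax F q) (c : E)
    (hF : Differentiable ℝ F) (hF' : DifferentiableAt ℝ (fun p => fderiv ℝ F p c) q) :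
    fderiv ℝ (fun p => fderiv ℝ F p c) q c ≤ 0 := by
  set ℓ : ℝ → E := fun t => q + t • c
  have hℓ0 : ℓ 0 = q := by simp [ℓ]
  have hℓ : ∀ t, HasDerivAt ℓ c t := fun t => by
    simpa only [one_smul] using ((hasDerivAt_id' t).smul_const c).const_add q
  have hderiv : deriv (F ∘ ℓ) = fun t => fderiv ℝ F (ℓ t) c :=
    funext fun t => ((hF _).hasFDerivAt.comp_hasDerivAt t (hℓ t)).deriv
  have hmax : IsLocalMax (F ∘ ℓ) 0 := (hℓ0 ▸ h).comp_continuous (hℓ 0).continuousAt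
  have hsecond := hmax.deriv_deriv_nonpos ((hF _).hasFDerivAt.comp_hasDerivAt 0 (hℓ 0)).continuousAt
  rw [← hℓ0] at hF' ⊢
  rw [hderiv] at hsecond
  exact (hF'.hasFDerivAt.comp_hasDerivAt 0 (hℓ 0)).deriv ▸ hsecond

section PartialDerivatives

variable {f g : ℝ × ℝ → ℝ} {p : ℝ × ℝ}

lemma ContDiff.contDiff_pdX {m n : WithTop ℕ∞} (hf : ContDiff ℝ n f) (h : m + 1 ≤ n) :
    ContDiff ℝ m (pdX f) :=
  (ContinuousLinearMap.apply ℝ ℝ ((1 : ℝ), (0 : ℝ))).contDiff.comp (hf.fderiv_right h)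

lemma ContDiff.contDiff_pdY {m n : WithTop ℕ∞} (hf : ContDiff ℝ n f) (h : m + 1 ≤ n) :
    ContDiff ℝ m (pdY f) :=
  (ContinuousLinearMap.apply ℝ ℝ ((0 : ℝ), (1 : ℝ))).contDiff.comp (hf.fderiv_right h)

lemma fderiv_apply_eq_pdX_add_pdY (a b : ℝ) : fderiv ℝ f p (a, b) = a * pdX f p + b * pdY f p := by
  have hab : ((a, b) : ℝ × ℝ) = a • ((1 : ℝ), (0 : ℝ)) + b • ((0 : ℝ), (1 : ℝ)) := by simp
  rw [hab, map_add, map_smul, map_smul, smul_eq_mul, smul_eq_mul, pdX, pdY]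

lemma pdX_const (c : ℝ) : pdX (fun _ => c) p = 0 := by simp [pdX]

lemma pdY_const (c : ℝ) : pdY (fun _ => c) p = 0 := by simp [pdY]

lemma pdX_congr (h : f =ᶠ[𝓝 p] g) : pdX f p = pdX g p := by rw [pdX, pdX, h.fderiv_eq]

lemma pdY_congr (h : f =ᶠ[𝓝 p] g) : pdY f p = pdY g p := by rw [pdY, pdY, h.fderiv_eq]

lemma pdX_add (hf : DifferentiableAt ℝ f p) (hg : DifferentiableAt ℝ g p) :
    pdX (fun q => f q + g q) p = pdX f p + pdX g p := by
  simp [pdX, fderiv_fun_add hf hg]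

lemma pdY_add (hf : DifferentiableAt ℝ f p) (hg : DifferentiableAt ℝ g p) :
    pdY (fun q => f q + g q) p = pdY f p + pdY g p := by
  simp [pdY, fderiv_fun_add hf hg]

lemma pdX_sub (hf : DifferentiableAt ℝ f p) (hg : DifferentiableAt ℝ g p) :
    pdX (fun q => f q - g q) p = pdX f p - pdX g p := by
  simp [pdX, fderiv_fun_sub hf hg]

lemma pdY_sub (hf : DifferentiableAt ℝ f p) (hg : DifferentiableAt ℝ g p) :
    pdY (fun q => f q - g q) p = pdY f p - pdY g p := by
  simp [pdY, fderiv_fun_sub hf hg]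

lemma pdX_comp {γ : ℝ → ℝ} (hγ : DifferentiableAt ℝ γ (f p)) (hf : DifferentiableAt ℝ f p) :
    pdX (fun q => γ (f q)) p = deriv γ (f p) * pdX f p := by
  have h : HasFDerivAt (fun q => γ (f q)) (deriv γ (f p) • fderiv ℝ f p) p :=
    hγ.hasDerivAt.comp_hasFDerivAt p hf.hasFDerivAt
  simp [pdX, h.fderiv]

lemma pdY_comp {γ : ℝ → ℝ} (hγ : DifferentiableAt ℝ γ (f p)) (hf : DifferentiableAt ℝ f p) :
    pdY (fun q => γ (f q)) p = deriv γ (f p) * pdY f p := by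
  have h : HasFDerivAt (fun q => γ (f q)) (deriv γ (f p) • fderiv ℝ f p) p :=
    hγ.hasDerivAt.comp_hasFDerivAt p hf.hasFDerivAt
  simp [pdY, h.fderiv]

lemma hasFDerivAt_comp_snd {φ : ℝ → ℝ} (hφ : DifferentiableAt ℝ φ p.2) :
    HasFDerivAt (fun q : ℝ × ℝ => φ q.2) (deriv φ p.2 • ContinuousLinearMap.snd ℝ ℝ ℝ) p :=
  hφ.hasDerivAt.comp_hasFDerivAt p (hasFDerivAt_snd (p := p))

lemma pdX_comp_snd {φ : ℝ → ℝ} (hφ : Differentiable ℝ φ) : pdX (fun q => φ q.2) = 0 := by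
  ext p
  simp [pdX, (hasFDerivAt_comp_snd (hφ p.2)).fderiv]

lemma pdY_comp_snd {φ : ℝ → ℝ} (hφ : Differentiable ℝ φ) :
    pdY (fun q => φ q.2) = fun q => deriv φ q.2 := by
  ext p
  simp [pdY, (hasFDerivAt_comp_snd (hφ p.2)).fderiv]

lemma pdX_pdY_comm (hf : ContDiff ℝ 2 f) (p : ℝ × ℝ) : pdX (pdY f) p = pdY (pdX f) p := by
  have hd : DifferentiableAt ℝ (fderiv ℝ f) p :=
    (hf.fderiv_right (m := 1) le_rfl).differentiable one_ne_zero p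
  have hsymm := (hf.contDiffAt (x := p)).isSymmSndFDerivAt (by simp)
  change fderiv ℝ (fun q => fderiv ℝ f q (0, 1)) p (1, 0)
    = fderiv ℝ (fun q => fderiv ℝ f q (1, 0)) p (0, 1)
  simpa [fderiv_clm_apply hd (differentiableAt_const _)] using hsymm _ _

lemma hasDerivAt_comp_graph {η : ℝ → ℝ} {x s : ℝ} (hf : DifferentiableAt ℝ f (x, η x))
    (hη : HasDerivAt η s x) :
    HasDerivAt (fun t => f (t, η t)) (pdX f (x, η x) + s * pdY f (x, η x)) x := by
  have h := hf.hasFDerivAt.comp_hasDerivAt x ((hasDerivAt_id' x).prodMk hη)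
  rwa [fderiv_apply_eq_pdX_add_pdY, one_mul] at h

lemma hasDerivAt_comp_vertical {x y : ℝ} (hf : DifferentiableAt ℝ f (x, y)) :
    HasDerivAt (fun t => f (x, t)) (pdY f (x, y)) y :=
  hf.hasFDerivAt.comp_hasDerivAt y ((hasDerivAt_const y x).prodMk (hasDerivAt_id' y))

lemma ContDiff.continuous_pdX {n : WithTop ℕ∞} (hf : ContDiff ℝ n f) (hn : 1 ≤ n) :
    Continuous (pdX f) :=
  (hf.contDiff_pdX (m := 0) (by simpa using hn)).continuous

lemma ContDiff.continuous_pdY {n : WithTop ℕ∞} (hf : ContDiff ℝ n f) (hn : 1 ≤ n) :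
    Continuous (pdY f) :=
  (hf.contDiff_pdY (m := 0) (by simpa using hn)).continuous

lemma ContDiff.differentiable_pdX (hf : ContDiff ℝ 2 f) : Differentiable ℝ (pdX f) :=
  (hf.contDiff_pdX (m := 1) (by norm_num)).differentiable one_ne_zero

lemma ContDiff.differentiable_pdY (hf : ContDiff ℝ 2 f) : Differentiable ℝ (pdY f) :=
  (hf.contDiff_pdY (m := 1) (by norm_num)).differentiable one_ne_zero

end PartialDerivatives

section Laplacian

variable {f g : ℝ × ℝ → ℝ}

noncomputable def lap (f : ℝ × ℝ → ℝ) (p : ℝ × ℝ) : ℝ := pdX (pdX f) p + pdY (pdY f) p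

lemma lap_add (hf : ContDiff ℝ 2 f) (hg : ContDiff ℝ 2 g) (p : ℝ × ℝ) :
    lap (fun q => f q + g q) p = lap f p + lap g p := by
  have hf₁ := hf.differentiable two_ne_zero
  have hg₁ := hg.differentiable two_ne_zero
  have hX : pdX (fun q => f q + g q) = fun q => pdX f q + pdX g q :=
    funext fun q => pdX_add (hf₁ q) (hg₁ q)
  have hY : pdY (fun q => f q + g q) = fun q => pdY f q + pdY g q :=
    funext fun q => pdY_add (hf₁ q) (hg₁ q)
  rw [lap, hX, hY, pdX_add (hf.differentiable_pdX p) (hg.differentiable_pdX p),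
    pdY_add (hf.differentiable_pdY p) (hg.differentiable_pdY p), lap, lap]
  ring

lemma lap_comp_snd {φ : ℝ → ℝ} (hφ : ContDiff ℝ 2 φ) (p : ℝ × ℝ) :
    lap (fun q => φ q.2) p = deriv (deriv φ) p.2 := by
  rw [lap, pdX_comp_snd (hφ.differentiable two_ne_zero),
    pdY_comp_snd (hφ.differentiable two_ne_zero), pdY_comp_snd hφ.differentiable_deriv_two]
  simp [pdX]

lemma IsLocalMax.lap_nonpos {q : ℝ × ℝ} (h : IsLocalMax f q) (hf : ContDiff ℝ 2 f) :
    lap f q ≤ 0 :=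
  add_nonpos
    (h.fderiv_fderiv_apply_nonpos _ (hf.differentiable two_ne_zero) (hf.differentiable_pdX q))
    (h.fderiv_fderiv_apply_nonpos _ (hf.differentiable two_ne_zero) (hf.differentiable_pdY q))

lemma lap_eq_of_vorticity_eq {u v ψ : ℝ × ℝ → ℝ} {γ : ℝ → ℝ} {q : ℝ × ℝ}
    (hu : ContDiff ℝ 2 u) (hv : ContDiff ℝ 2 v) (hψ : DifferentiableAt ℝ ψ q)
    (hγ : DifferentiableAt ℝ γ (ψ q))
    (hdiv : (fun p => pdX u p + pdY v p) =ᶠ[𝓝 q] fun _ => 0)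
    (hvort : (fun p => pdX v p - pdY u p) =ᶠ[𝓝 q] fun p => γ (ψ p))
    (hψx : pdX ψ q = -v q) (hψy : pdY ψ q = u q) :
    lap u q = -deriv γ (ψ q) * u q ∧ lap v q = -deriv γ (ψ q) * v q := by
  have hdivX := pdX_congr hdiv
  have hdivY := pdY_congr hdiv
  have hvortX := pdX_congr hvort
  have hvortY := pdY_congr hvort
  rw [pdX_add (hu.differentiable_pdX q) (hv.differentiable_pdY q), pdX_const] at hdivX
  rw [pdY_add (hu.differentiable_pdX q) (hv.differentiable_pdY q), pdY_const] at hdivY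
  rw [pdX_sub (hv.differentiable_pdX q) (hu.differentiable_pdY q), pdX_comp hγ hψ, hψx]
    at hvortX
  rw [pdY_sub (hv.differentiable_pdX q) (hu.differentiable_pdY q), pdY_comp hγ hψ, hψy]
    at hvortY
  have hu_comm := pdX_pdY_comm hu q
  have hv_comm := pdX_pdY_comm hv q
  constructor <;> [rw [lap]; rw [lap]] <;> linarith

end Laplacian

lemma eq_of_eqOn_Ioo_of_continuousWithinAt {f g : ℝ → ℝ} {a b : ℝ} (hab : a < b)
    (hf : ContinuousWithinAt f (Ioo a b) b) (hg : ContinuousWithinAt g (Ioo a b) b)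
    (h : EqOn f g (Ioo a b)) : f b = g b :=
  haveI := right_nhdsWithin_Ioo_neBot hab
  tendsto_nhds_unique_of_eventuallyEq hf hg (eventuallyEq_nhdsWithin_of_eqOn h)

/-- The perturbation argument of the weak maximum principle. -/
theorem IsCompact.exists_isMaxOn_diff_of_perturbation {X : Type*} [TopologicalSpace X]
    {K U : Set X} (hK : IsCompact K) (hU : IsOpen U) (hUK : U ⊆ K) {f h : X → ℝ}
    (hf : ContinuousOn f K) (hh : ContinuousOn h K) (hh₀ : ∀ p ∈ K, 0 ≤ h p)
    (hf₀ : ∃ p ∈ K, 0 ≤ f p)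
    (hU_max : ∀ ε > 0, ∀ q ∈ U, IsLocalMax (fun p => f p + ε * h p) q → f q + ε * h q < 0) :
    ∃ p ∈ K \ U, IsMaxOn f K p := by
  obtain ⟨p₁, hp₁K, hp₁⟩ := hf₀
  have hmax_out : ∀ ε > 0, ∃ q ∈ K \ U, IsMaxOn (fun p => f p + ε * h p) K q := by
    intro ε hε
    obtain ⟨q, hqK, hq⟩ := hK.exists_isMaxOn ⟨p₁, hp₁K⟩ (hf.add (continuousOn_const.mul hh))
    refine ⟨q, ⟨hqK, fun hqU => ?_⟩, hq⟩
    have hneg := hU_max ε hε q hqU (hq.isLocalMax (mem_of_superset (hU.mem_nhds hqU) hUK))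
    have hle : f p₁ + ε * h p₁ ≤ f q + ε * h q := hq hp₁K
    nlinarith [hh₀ p₁ hp₁K]
  obtain ⟨q₁, hq₁, -⟩ := hmax_out 1 one_pos
  obtain ⟨p₀, hp₀, hp₀max⟩ :=
    (hK.diff hU).exists_isMaxOn ⟨q₁, hq₁⟩ (hf.mono sdiff_subset)
  obtain ⟨C, hC⟩ := hK.bddAbove_image hh
  refine ⟨p₀, hp₀, fun p hp => show f p ≤ f p₀ from le_of_forall_pos_le_add fun δ hδ => ?_⟩
  set ε := δ / (|C| + 1)
  have hε : 0 < ε := by positivity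
  obtain ⟨q, hq, hqmax⟩ := hmax_out ε hε
  have hεC : ε * h q ≤ δ := by
    calc ε * h q ≤ ε * (|C| + 1) := by
          gcongr; exact (hC (mem_image_of_mem h hq.1)).trans ((le_abs_self C).trans (by linarith))
      _ = δ := div_mul_cancel₀ δ (by positivity)
  have hq₀ : f q ≤ f p₀ := hp₀max hq
  calc f p ≤ f p + ε * h p := le_add_of_nonneg_right (mul_nonneg hε.le (hh₀ p hp))
    _ ≤ f q + ε * h q := hqmax hp
    _ ≤ f p₀ + δ := add_le_add hq₀ hεC

lemma isCompact_region_under_graph {a b c : ℝ} {η : ℝ → ℝ} (hη : Continuous η) :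
    IsCompact {p : ℝ × ℝ | a ≤ p.1 ∧ p.1 ≤ b ∧ c ≤ p.2 ∧ p.2 ≤ η p.1} := by
  obtain ⟨M, hM⟩ := (isCompact_Icc (a := a) (b := b)).bddAbove_image hη.continuousOn
  refine isCompact_Icc (a := (a, c)) (b := (b, M)) |>.of_isClosed_subset ?_ ?_
  · exact (isClosed_le continuous_const continuous_fst).inter
      ((isClosed_le continuous_fst continuous_const).inter
        ((isClosed_le continuous_const continuous_snd).inter
          (isClosed_le continuous_snd (hη.comp continuous_fst))))
  · rintro ⟨x, y⟩ ⟨hax, hxb, hcy, hyη⟩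
    exact ⟨⟨hax, hcy⟩, hxb, hyη.trans (hM (mem_image_of_mem η ⟨hax, hxb⟩))⟩

lemma IsCompact.exists_forall_le_of_forall_lt {X : Type*} [TopologicalSpace X] {K : Set X}
    (hK : IsCompact K) {F : X → ℝ} (hF : ContinuousOn F K) {a : ℝ} (h : ∀ p ∈ K, F p < a) :
    ∃ c < a, ∀ p ∈ K, F p ≤ c := by
  rcases K.eq_empty_or_nonempty with rfl | hne
  · exact ⟨a - 1, by linarith, by simp⟩
  · obtain ⟨p, hp, hpmax⟩ := hK.exists_isMaxOn hne hF
    exact ⟨F p, h p hp, hpmax⟩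

/-- Eliminating the pressure between the two Euler equations gives
`U_x (V² - U²) - U V (U_y + V_x) = g V`; if `U + V ≥ 0` this forces `U_y > 0` and slope
`s ≤ -1`, which is incompatible with the vanishing tangential derivative of `U + V`. -/
lemma add_neg_of_surface_relations {g U V Ux Uy Vx Vy Px Py s : ℝ} (hg : 0 < g) (hU : U < 0)
    (hUx : Ux < 0) (hvort : Vx - Uy ≤ 0) (hkin : V = s * U) (hdiv : Ux + Vy = 0)
    (heuler_x : U * Ux + V * Uy = -Px) (heuler_y : U * Vx + V * Vy = -Py - g)
    (hP : Px + s * Py = 0) (htan : Ux + s * Uy + (Vx + s * Vy) = 0) : U + V < 0 := by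
  by_contra! hM
  have hV : 0 < V := by linarith
  have hpressure : Ux * (V ^ 2 - U ^ 2) - U * V * (Uy + Vx) - g * V = 0 := by
    linear_combination U * hP + Py * hkin - U * heuler_x - V * heuler_y + V ^ 2 * hdiv
  have hUV : U * V < 0 := mul_neg_of_neg_of_pos hU hV
  have hsq : Ux * (V ^ 2 - U ^ 2) ≤ 0 := mul_nonpos_of_nonpos_of_nonneg hUx.le (by nlinarith)
  have hUy_Vx : 0 < Uy + Vx := by
    by_contra! hle
    nlinarith [mul_nonneg (neg_nonneg.mpr hUV.le) (neg_nonneg.mpr hle)]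
  have hUy : 0 < Uy - Ux := by linarith
  have hs : s ≤ -1 := by nlinarith
  nlinarith [mul_le_mul_of_nonneg_right hs hUy.le]

lemma deriv_deriv_const_mul_exp_mul (ε α t : ℝ) :
    deriv (deriv fun x => ε * Real.exp (α * x)) t = ε * α ^ 2 * Real.exp (α * t) := by
  have h : ∀ c t : ℝ, HasDerivAt (fun x => c * Real.exp (α * x)) (c * α * Real.exp (α * t)) t :=
    fun c t => by simpa [mul_comm, mul_left_comm, mul_assoc] using
      (((hasDerivAt_id' t).const_mul α).exp.const_mul c)
  rw [funext fun t => (h ε t).deriv, (h (ε * α) t).deriv]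
  ring

namespace PeriodicWave

variable {g Patm L : ℝ} (W : PeriodicWave g Patm L)

def ΩplusBar : Set (ℝ × ℝ) :=
  {p | 0 ≤ p.1 ∧ p.1 ≤ L ∧ -W.d ≤ p.2 ∧ p.2 ≤ W.η p.1}

lemma isCompact_Ωbar : IsCompact W.Ωbar :=
  isCompact_region_under_graph W.η_smooth.continuous

lemma isCompact_ΩplusBar : IsCompact W.ΩplusBar :=
  isCompact_region_under_graph W.η_smooth.continuous

lemma isOpen_fluid : IsOpen {p : ℝ × ℝ | -W.d < p.2 ∧ p.2 < W.η p.1} :=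
  (isOpen_lt continuous_const continuous_snd).and
    (isOpen_lt continuous_snd (W.η_smooth.continuous.comp continuous_fst))

lemma isOpen_Ωplus : IsOpen W.Ωplus :=
  (isOpen_lt continuous_const continuous_fst).and
    ((isOpen_lt continuous_fst continuous_const).and W.isOpen_fluid)

lemma Ωplus_subset_ΩplusBar : W.Ωplus ⊆ W.ΩplusBar :=
  fun _ ⟨h₁, h₂, h₃, h₄⟩ => ⟨h₁.le, h₂.le, h₃.le, h₄.le⟩

lemma u_neg {x y : ℝ} (hy₁ : -W.d ≤ y) (hy₂ : y ≤ W.η x) : W.u (x, y) < 0 := by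
  obtain ⟨δ, hδ, hu⟩ := W.nonstagnant
  linarith [hu x y hy₁ hy₂]

lemma v_eq_zero_crest (y : ℝ) : W.v (0, y) = 0 := by
  have h := W.v_odd 0 y
  rw [neg_zero] at h
  linarith

lemma v_eq_zero_trough (y : ℝ) : W.v (L, y) = 0 := by
  have h := W.v_periodic (-L) y
  rw [show -L + 2 * L = L by ring, W.v_odd] at h
  linarith

lemma mem_Splus_or_v_eq_zero {p : ℝ × ℝ} (hp : p ∈ W.ΩplusBar \ W.Ωplus) :
    p ∈ W.Splus ∨ W.v p = 0 := by
  obtain ⟨⟨hx₁, hx₂, hy₁, hy₂⟩, hp⟩ := hp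
  obtain ⟨x, y⟩ := p
  rcases hx₁.eq_or_lt with rfl | hx₁
  · exact .inr (W.v_eq_zero_crest y)
  rcases hx₂.eq_or_lt with rfl | hx₂
  · exact .inr (W.v_eq_zero_trough y)
  rcases hy₁.eq_or_lt with rfl | hy₁
  · exact .inr (W.bed_kinematic x)
  rcases hy₂.eq_or_lt with hy₂ | hy₂
  · exact .inl ⟨hx₁, hx₂, hy₂⟩
  · exact absurd ⟨hx₁, hx₂, hy₁, hy₂⟩ hp

lemma strictAntiOn_ψ (x : ℝ) : StrictAntiOn (fun y => W.ψ (x, y)) (Icc (-W.d) (W.η x)) := by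
  refine strictAntiOn_of_deriv_neg (convex_Icc _ _)
    (W.ψ_smooth.continuous.comp (continuous_const.prodMk continuous_id)).continuousOn
    fun y hy => ?_
  rw [interior_Icc] at hy
  rw [(hasDerivAt_comp_vertical (W.ψ_smooth.differentiable (by norm_num) _)).deriv,
    W.psi_y x y hy.1.le hy.2.le]
  exact W.u_neg hy.1.le hy.2.le

lemma ψ_mem_Icc {x y : ℝ} (hy₁ : -W.d ≤ y) (hy₂ : y ≤ W.η x) : W.ψ (x, y) ∈ Icc 0 W.m := by
  have hanti := (W.strictAntiOn_ψ x).antitoneOn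
  have hd : -W.d ≤ W.η x := hy₁.trans hy₂
  constructor
  · simpa [W.psi_surface] using hanti ⟨hy₁, hy₂⟩ ⟨hd, le_rfl⟩ hy₂
  · simpa [W.psi_bed] using hanti ⟨le_rfl, hd⟩ ⟨hy₁, hy₂⟩ hy₁

lemma ψ_mem_Ioo {x y : ℝ} (hy₁ : -W.d < y) (hy₂ : y < W.η x) : W.ψ (x, y) ∈ Ioo 0 W.m := by
  have hanti := W.strictAntiOn_ψ x
  have hd : -W.d ≤ W.η x := hy₁.le.trans hy₂.le
  constructor
  · simpa [W.psi_surface] using hanti ⟨hy₁.le, hy₂.le⟩ ⟨hd, le_rfl⟩ hy₂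
  · simpa [W.psi_bed] using hanti ⟨le_rfl, hd⟩ ⟨hy₁.le, hy₂.le⟩ hy₁

lemma neg_d_lt_η {x : ℝ} (hx : -W.d ≤ W.η x) : -W.d < W.η x := by
  refine hx.lt_of_ne fun h => W.m_pos.ne' ?_
  rw [← W.psi_bed x, h, W.psi_surface]

lemma eq_at_surface_of_eq_in_fluid {F G : ℝ × ℝ → ℝ} {x : ℝ} (hx : -W.d < W.η x) (hF : Continuous F)
    (hG : Continuous G) (h : ∀ y, -W.d < y → y < W.η x → F (x, y) = G (x, y)) :
    F (x, W.η x) = G (x, W.η x) :=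
  eq_of_eqOn_Ioo_of_continuousWithinAt hx
    (hF.comp (continuous_const.prodMk continuous_id)).continuousWithinAt
    (hG.comp (continuous_const.prodMk continuous_id)).continuousWithinAt
    fun y hy => h y hy.1 hy.2

lemma incompressible_surface {x : ℝ} (hx : -W.d < W.η x) :
    pdX W.u (x, W.η x) + pdY W.v (x, W.η x) = 0 :=
  W.eq_at_surface_of_eq_in_fluid (G := fun _ => 0) hx
    ((W.u_smooth.continuous_pdX (by norm_num)).add (W.v_smooth.continuous_pdY (by norm_num)))
    continuous_const fun y => W.incompressible x y

lemma euler_x_surface {x : ℝ} (hx : -W.d < W.η x) :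
    W.u (x, W.η x) * pdX W.u (x, W.η x) + W.v (x, W.η x) * pdY W.u (x, W.η x)
      = -pdX W.P (x, W.η x) :=
  W.eq_at_surface_of_eq_in_fluid hx
    ((W.u_smooth.continuous.mul (W.u_smooth.continuous_pdX (by norm_num))).add
      (W.v_smooth.continuous.mul (W.u_smooth.continuous_pdY (by norm_num))))
    (W.P_smooth.continuous_pdX (by norm_num)).neg fun y => W.euler_x x y

lemma euler_y_surface {x : ℝ} (hx : -W.d < W.η x) :
    W.u (x, W.η x) * pdX W.v (x, W.η x) + W.v (x, W.η x) * pdY W.v (x, W.η x)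
      = -pdY W.P (x, W.η x) - g :=
  W.eq_at_surface_of_eq_in_fluid hx
    ((W.u_smooth.continuous.mul (W.v_smooth.continuous_pdX (by norm_num))).add
      (W.v_smooth.continuous.mul (W.v_smooth.continuous_pdY (by norm_num))))
    ((W.P_smooth.continuous_pdY (by norm_num)).neg.sub continuous_const) fun y => W.euler_y x y

lemma vorticity_surface {x : ℝ} (hx : -W.d < W.η x) :
    pdX W.v (x, W.η x) - pdY W.u (x, W.η x) = W.γ 0 := by
  have hslice : Continuous fun y => ((x, y) : ℝ × ℝ) := continuous_const.prodMk continuous_id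
  have hγψ : ContinuousWithinAt (fun y => W.γ (W.ψ (x, y))) (Ioo (-W.d) (W.η x)) (W.η x) := by
    refine ContinuousWithinAt.comp (t := Icc 0 W.m) ?_
      (W.ψ_smooth.continuous.comp hslice).continuousWithinAt
      fun y hy => W.ψ_mem_Icc hy.1.le hy.2.le
    simpa [W.psi_surface] using W.γ_smooth.continuousOn 0 (left_mem_Icc.mpr W.m_pos.le)
  simpa [W.psi_surface] using eq_of_eqOn_Ioo_of_continuousWithinAt hx
    (((W.v_smooth.continuous_pdX (by norm_num)).sub
      (W.u_smooth.continuous_pdY (by norm_num))).comp hslice).continuousWithinAt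
    hγψ fun y hy => W.vorticity_eq x y hy.1 hy.2

lemma pressure_tangential (x : ℝ) :
    pdX W.P (x, W.η x) + deriv W.η x * pdY W.P (x, W.η x) = 0 := by
  have h := hasDerivAt_comp_graph (W.P_smooth.differentiable (by norm_num) (x, W.η x))
    (W.η_smooth.differentiable (by norm_num) x).hasDerivAt
  rw [funext W.surface_pressure] at h
  exact h.unique (hasDerivAt_const x Patm)

lemma add_neg_of_isLocalMax_surface (hg : 0 < g) (hγ₀ : W.γ 0 ≤ 0) {x₀ : ℝ}
    (hx₀ : -W.d < W.η x₀) (hux : pdX W.u (x₀, W.η x₀) < 0)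
    (hmax : IsLocalMax (fun x => W.u (x, W.η x) + W.v (x, W.η x)) x₀) :
    W.u (x₀, W.η x₀) + W.v (x₀, W.η x₀) < 0 := by
  have hη := (W.η_smooth.differentiable (by norm_num) x₀).hasDerivAt
  have htan := hmax.hasDerivAt_eq_zero
    ((hasDerivAt_comp_graph (W.u_smooth.differentiable (by norm_num) _) hη).add
      (hasDerivAt_comp_graph (W.v_smooth.differentiable (by norm_num) _) hη))
  exact add_neg_of_surface_relations hg (W.u_neg hx₀.le le_rfl) hux
    (by rw [W.vorticity_surface hx₀]; exact hγ₀) (W.surface_kinematic x₀)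
    (W.incompressible_surface hx₀) (W.euler_x_surface hx₀) (W.euler_y_surface hx₀)
    (W.pressure_tangential x₀) htan

lemma lap_u_and_lap_v {q : ℝ × ℝ} (hq₁ : -W.d < q.2) (hq₂ : q.2 < W.η q.1) :
    lap W.u q = -deriv W.γ (W.ψ q) * W.u q ∧ lap W.v q = -deriv W.γ (W.ψ q) * W.v q := by
  have hfluid := W.isOpen_fluid.mem_nhds (show q ∈ _ from ⟨hq₁, hq₂⟩)
  have hψ := W.ψ_mem_Ioo hq₁ hq₂
  refine lap_eq_of_vorticity_eq (W.u_smooth.of_le (by norm_num)) (W.v_smooth.of_le (by norm_num))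
    (W.ψ_smooth.differentiable (by norm_num) q)
    ((W.γ_smooth.contDiffAt (Icc_mem_nhds hψ.1 hψ.2)).differentiableAt (by norm_num))
    ?_ ?_ (W.psi_x q.1 q.2 hq₁.le hq₂.le) (W.psi_y q.1 q.2 hq₁.le hq₂.le)
  · filter_upwards [hfluid] with p hp using W.incompressible p.1 p.2 hp.1 hp.2
  · filter_upwards [hfluid] with p hp using W.vorticity_eq p.1 p.2 hp.1 hp.2

/-- At a nonnegative interior maximum the Laplacian `-γ'(ψ) (u + v) + ε α² e^{α y}` would be
positive. -/
lemma add_neg_of_isLocalMax_perturbed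
    (hγ' : ∀ s ∈ Icc 0 W.m, derivWithin W.γ (Icc 0 W.m) s ≤ 0) {α ε : ℝ}
    (hα : ∀ s ∈ Icc 0 W.m, -derivWithin W.γ (Icc 0 W.m) s < α ^ 2) (hε : 0 < ε)
    {q : ℝ × ℝ} (hq₁ : -W.d < q.2) (hq₂ : q.2 < W.η q.1)
    (hmax : IsLocalMax (fun p => W.u p + W.v p + ε * Real.exp (α * p.2)) q) :
    W.u q + W.v q + ε * Real.exp (α * q.2) < 0 := by
  have hu : ContDiff ℝ 2 W.u := W.u_smooth.of_le (by norm_num)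
  have hv : ContDiff ℝ 2 W.v := W.v_smooth.of_le (by norm_num)
  have hexp : ContDiff ℝ 2 fun t => ε * Real.exp (α * t) := by fun_prop
  have hψ := W.ψ_mem_Ioo hq₁ hq₂
  have hderiv : derivWithin W.γ (Icc 0 W.m) (W.ψ q) = deriv W.γ (W.ψ q) :=
    derivWithin_of_mem_nhds (Icc_mem_nhds hψ.1 hψ.2)
  have hγ'q := hderiv ▸ hγ' _ (Ioo_subset_Icc_self hψ)
  have hαq := hderiv ▸ hα _ (Ioo_subset_Icc_self hψ)
  obtain ⟨hlap_u, hlap_v⟩ := W.lap_u_and_lap_v hq₁ hq₂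
  have hlap := hmax.lap_nonpos ((hu.add hv).add (hexp.comp contDiff_snd))
  rw [lap_add (g := fun p => ε * Real.exp (α * p.2)) (hu.add hv) (hexp.comp contDiff_snd),
    lap_add hu hv, lap_comp_snd hexp,
    deriv_deriv_const_mul_exp_mul, hlap_u, hlap_v] at hlap
  by_contra! hval
  nlinarith [mul_pos hε (Real.exp_pos (α * q.2)), mul_nonneg (neg_nonneg.mpr hγ'q) hval]

lemma isLocalMax_surface_of_isMaxOn {F : ℝ × ℝ → ℝ} {x₀ : ℝ} (hx₀ : x₀ ∈ Ioo 0 L)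
    (hη : -W.d < W.η x₀) (hmax : IsMaxOn F W.ΩplusBar (x₀, W.η x₀)) :
    IsLocalMax (fun x => F (x, W.η x)) x₀ := by
  filter_upwards [Ioo_mem_nhds hx₀.1 hx₀.2,
    W.η_smooth.continuous.continuousAt.eventually (lt_mem_nhds hη)] with x hx hηx
  exact hmax ⟨hx.1.le, hx.2.le, hηx.le, le_rfl⟩

theorem u_add_v_neg (hg : 0 < g) (hγ₀ : W.γ 0 ≤ 0)
    (hγ' : ∀ s ∈ Icc 0 W.m, derivWithin W.γ (Icc 0 W.m) s ≤ 0)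
    (hux : ∀ p ∈ W.Splus, pdX W.u p < 0) : ∀ p ∈ W.ΩplusBar, W.u p + W.v p < 0 := by
  by_contra! hf₀
  obtain ⟨B, hB⟩ := isCompact_Icc.bddAbove_image
    (W.γ_smooth.continuousOn_derivWithin (uniqueDiffOn_Icc W.m_pos) (by norm_num)).neg
  have hα : ∀ s ∈ Icc 0 W.m, -derivWithin W.γ (Icc 0 W.m) s < (|B| + 1) ^ 2 := fun s hs => by
    have hBs : -derivWithin W.γ (Icc 0 W.m) s ≤ B := hB (mem_image_of_mem _ hs)
    nlinarith [le_abs_self B, abs_nonneg B]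
  obtain ⟨⟨x₀, y₀⟩, hp₀, hp₀max⟩ := W.isCompact_ΩplusBar.exists_isMaxOn_diff_of_perturbation
    W.isOpen_Ωplus W.Ωplus_subset_ΩplusBar
    (W.u_smooth.continuous.add W.v_smooth.continuous).continuousOn
    (Real.continuous_exp.comp (continuous_const.mul continuous_snd)).continuousOn
    (fun _ _ => (Real.exp_pos _).le) hf₀
    fun ε hε q hq hmax => W.add_neg_of_isLocalMax_perturbed hγ' hα hε hq.2.2.1 hq.2.2.2 hmax
  obtain ⟨p₁, hp₁, hf₁⟩ := hf₀
  have hp₀_nonneg : 0 ≤ W.u (x₀, y₀) + W.v (x₀, y₀) := hf₁.trans (hp₀max hp₁)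
  have hy₀ : -W.d ≤ y₀ ∧ y₀ ≤ W.η x₀ := hp₀.1.2.2
  rcases W.mem_Splus_or_v_eq_zero hp₀ with ⟨hx₁, hx₂, hy : y₀ = W.η x₀⟩ | hv
  · subst hy
    have hη := W.neg_d_lt_η hy₀.1
    have := W.add_neg_of_isLocalMax_surface hg hγ₀ hη (hux _ ⟨hx₁, hx₂, rfl⟩)
      (W.isLocalMax_surface_of_isMaxOn ⟨hx₁, hx₂⟩ hη hp₀max)
    linarith
  · linarith [W.u_neg hy₀.1 hy₀.2]

lemma v_nonneg (hmono : W.MonotoneHalf) {p : ℝ × ℝ} (hp : p ∈ W.ΩplusBar) : 0 ≤ W.v p := by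
  by_cases hp' : p ∈ W.Ωplus
  · exact (hmono p (.inl hp')).le
  rcases W.mem_Splus_or_v_eq_zero ⟨hp, hp'⟩ with hS | hv
  · exact (hmono p (.inr hS)).le
  · exact hv.ge

lemma η_abs (x : ℝ) : W.η |x| = W.η x := by
  rcases abs_choice x with h | h <;> rw [h]
  exact W.η_even x

lemma abs_v_div_u_reflect (x y : ℝ) :
    |W.v (|x|, y) / W.u (|x|, y)| = |W.v (x, y) / W.u (x, y)| := by
  rcases abs_choice x with h | h <;> rw [h]
  rw [W.v_odd, W.u_even, neg_div, abs_neg]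

lemma abs_v_div_u_lt_one (hg : 0 < g) (hγ₀ : W.γ 0 ≤ 0)
    (hγ' : ∀ s ∈ Icc 0 W.m, derivWithin W.γ (Icc 0 W.m) s ≤ 0) (hmono : W.MonotoneHalf)
    (hux : ∀ p ∈ W.Splus, pdX W.u p < 0) {p : ℝ × ℝ} (hp : p ∈ W.Ωbar) :
    |W.v p / W.u p| < 1 := by
  obtain ⟨x, y⟩ := p
  obtain ⟨hx₁, hx₂, hy₁, hy₂⟩ := hp
  have hq : (|x|, y) ∈ W.ΩplusBar :=
    ⟨abs_nonneg x, abs_le.mpr ⟨hx₁, hx₂⟩, hy₁, (W.η_abs x).symm ▸ hy₂⟩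
  have hu := W.u_neg hq.2.2.1 hq.2.2.2
  have huv := W.u_add_v_neg hg hγ₀ hγ' hux _ hq
  rw [← W.abs_v_div_u_reflect, abs_div, abs_of_nonneg (W.v_nonneg hmono hq), abs_of_neg hu,
    div_lt_one (neg_pos.mpr hu)]
  linarith

end PeriodicWave

theorem periodic_slope_max_lt_one_general (g Patm L : ℝ) (hg : 0 < g)
    (W : PeriodicWave g Patm L) (hMW : W.MemW)
    (hux : ∀ p ∈ W.Ωplus ∪ W.Splus, pdX W.u p < 0) :
    ∃ c < (1:ℝ), ∀ p ∈ W.Ωbar, |W.v p / W.u p| ≤ c := by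
  have hlt : ∀ p ∈ W.Ωbar, |W.v p / W.u p| < 1 := by
    obtain ⟨hγ, hγ', -, htriv | hmono⟩ := hMW
    · intro p _
      simp [htriv.1 p]
    · exact fun p => W.abs_v_div_u_lt_one hg (hγ 0 (left_mem_Icc.mpr W.m_pos.le)) hγ' hmono
        fun p hp => hux p (.inr hp)
  have hu : ∀ p ∈ W.Ωbar, W.u p ≠ 0 := fun p hp => (W.u_neg hp.2.2.1 hp.2.2.2).ne
  exact W.isCompact_Ωbar.exists_forall_le_of_forall_lt
    (W.v_smooth.continuous.continuousOn.div W.u_smooth.continuous.continuousOn hu).abs hlt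

/-- **Lemma (slope bound from `u_x < 0`, periodic case).**  If a periodic wave in `𝒲`
satisfies `u_x < 0` everywhere on `Ω⁺ ∪ S⁺`, then the maximum of `|v/u|` over the closure
of `Ω` is strictly less than `1`. -/
theorem periodic_slope_max_lt_one (g Patm L : ℝ) (hg : 0 < g) (hL : 0 < L)
    (W : PeriodicWave g Patm L) (hMW : W.MemW)
    (hux : ∀ p ∈ W.Ωplus ∪ W.Splus, pdX W.u p < 0) :
    ∃ c < (1:ℝ), ∀ p ∈ W.Ωbar, |W.v p / W.u p| ≤ c :=
  periodic_slope_max_lt_one_general g Patm L hg W hMW hux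
end

section
/- Let g > 0, m > 0 and γ₀ < 0, and let Γ : [−m, 0] → ℝ be a C² convex function (Γ″ ≥ 0) with Γ(0) = 0 and Γ′(0) = γ₀. Then Γ ≥ 0 on [−m, 0], the function Q̃(λ) = λ/2 + g·∫_{−m}^{0} (λ + 2Γ(s))^{−1/2} ds is well defined and strictly convex on (0, ∞), and Q̃′(g²/γ₀²) > 0. Consequently, any critical point λ_cr ∈ (0, ∞) of Q̃ (i.e., Q̃′(λ_cr) = 0) satisfies γ₀² · λ_cr < g². -/
/-!
Convexity puts `Γ` above its tangent line `γ₀ s` at `0`, so `Γ ≥ 0` on `[-m, 0]` and the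
integrand is smooth in `λ > 0`. Differentiating under the integral sign,
`Q̃'(λ) = 1/2 - g ∫ (λ + 2Γ)^{-3/2} / 2`, which is strictly increasing. At `λ = g²/γ₀²`,
replacing `Γ` by its tangent line can only increase the integral, and the integral for the tangent
line is explicit: over `(-∞, 0]` it would be exactly `1/(2g)`, so over `[-m, 0]` it is
smaller. Hence `Q̃'(g²/γ₀²) > 0`, and the zero of the increasing `Q̃'` lies to the left of `g²/γ₀²`.
-/

open Set MeasureTheory

open scoped Interval

lemma hasDerivAt_one_div_sqrt {x : ℝ} (hx : 0 < x) :
    HasDerivAt (fun u => 1 / √u) (-(1 / (2 * (x * √x)))) x := by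
  have hsx : √x ≠ 0 := (Real.sqrt_pos.2 hx).ne'
  simp only [one_div]
  refine ((Real.hasDerivAt_sqrt hx.ne').inv hsx).congr_deriv ?_
  rw [Real.sq_sqrt hx.le]
  ring

lemma continuousOn_one_div_sqrt : ContinuousOn (fun u : ℝ => 1 / √u) (Ioi 0) :=
  fun _ hx => (hasDerivAt_one_div_sqrt hx).continuousAt.continuousWithinAt

lemma continuousOn_one_div_two_mul_mul_sqrt :
    ContinuousOn (fun u : ℝ => 1 / (2 * (u * √u))) (Ioi 0) := by
  refine continuousOn_const.div (by fun_prop) fun u hu => ?_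
  have : 0 < √u := Real.sqrt_pos.2 hu
  exact (mul_pos two_pos (mul_pos hu this)).ne'

lemma strictAntiOn_one_div_two_mul_mul_sqrt :
    StrictAntiOn (fun u : ℝ => 1 / (2 * (u * √u))) (Ioi 0) := by
  intro u (hu : 0 < u) v _ huv
  have hu' : 0 < √u := Real.sqrt_pos.2 hu
  have : u * √u < v * √v := mul_lt_mul'' huv (Real.sqrt_lt_sqrt hu.le huv) hu.le hu'.le
  dsimp only
  gcongr

lemma ConvexOn.apply_add_deriv_mul_sub_le {S : Set ℝ} {f : ℝ → ℝ} {x y : ℝ}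
    (hf : ConvexOn ℝ S f) (hx : x ∈ S) (hy : y ∈ S) (hfx : DifferentiableAt ℝ f x) :
    f x + deriv f x * (y - x) ≤ f y := by
  rcases lt_trichotomy y x with hyx | rfl | hxy
  · have h := hf.slope_le_deriv hy hx hyx hfx
    rw [slope_def_field, div_le_iff₀ (sub_pos.2 hyx)] at h
    linarith
  · simp
  · have h := hf.deriv_le_slope hx hy hxy hfx
    rw [slope_def_field, le_div_iff₀ (sub_pos.2 hxy)] at h
    linarith

lemma convexOn_of_contDiff_two_of_deriv2_nonneg {D : Set ℝ} (hD : Convex ℝ D) {f : ℝ → ℝ}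
    (hf : ContDiff ℝ 2 f) (hf'' : ∀ x ∈ D, 0 ≤ deriv (deriv f) x) : ConvexOn ℝ D f :=
  convexOn_of_deriv2_nonneg hD hf.continuous.continuousOn
    (hf.differentiable two_ne_zero).differentiableOn hf.differentiable_deriv_two.differentiableOn
    fun x hx => by simpa using hf'' x (interior_subset hx)

section ParametricIntegral

variable {a b : ℝ} {φ : ℝ → ℝ}

lemma ContinuousOn.comp_const_add_nonneg {k : ℝ → ℝ} (hk : ContinuousOn k (Ioi 0))
    (hφ : Continuous φ) (hφ0 : ∀ s ∈ Icc a b, 0 ≤ φ s) {x : ℝ} (hx : 0 < x) :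
    ContinuousOn (fun s => k (x + φ s)) (Icc a b) :=
  hk.comp (by fun_prop) fun s hs => show 0 < x + φ s by linarith [hφ0 s hs]

lemma hasDerivAt_integral_one_div_sqrt_add (hφ : Continuous φ) (hφ0 : ∀ s ∈ Icc a b, 0 ≤ φ s)
    (hab : a ≤ b) {x : ℝ} (hx : 0 < x) :
    HasDerivAt (fun y => ∫ s in a..b, 1 / √(y + φ s))
      (-∫ s in a..b, 1 / (2 * ((x + φ s) * √(x + φ s)))) x := by
  have hφm := hφ.measurable
  have hΙ : ∀ s ∈ Ι a b, 0 ≤ φ s := fun s hs =>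
    hφ0 s (Ioc_subset_Icc_self (by rwa [uIoc_of_le hab] at hs))
  have hpos : ∀ s ∈ Ι a b, ∀ y ∈ Metric.ball x (x / 2), x / 2 < y + φ s := fun s hs y hy => by
    rw [Metric.mem_ball, Real.dist_eq, abs_sub_lt_iff] at hy
    linarith [hΙ s hs]
  rw [← intervalIntegral.integral_neg]
  refine (intervalIntegral.hasDerivAt_integral_of_dominated_loc_of_deriv_le
    (F' := fun y s => -(1 / (2 * ((y + φ s) * √(y + φ s)))))
    (bound := fun _ => 1 / (2 * (x / 2 * √(x / 2))))
    (Metric.ball_mem_nhds x (half_pos hx))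
    (.of_forall fun y => (by fun_prop : Measurable _).aestronglyMeasurable)
    ((continuousOn_one_div_sqrt.comp_const_add_nonneg hφ hφ0 hx).intervalIntegrable_of_Icc hab)
    (by fun_prop : Measurable _).aestronglyMeasurable (.of_forall fun s hs y hy => ?_)
    intervalIntegrable_const (.of_forall fun s hs y hy => ?_)).2
  · have h := hpos s hs y hy
    have hu : 0 < y + φ s := (half_pos hx).trans h
    rw [norm_neg, Real.norm_of_nonneg
      (one_div_nonneg.2 (mul_nonneg zero_le_two (mul_nonneg hu.le (Real.sqrt_nonneg _))))]
    exact strictAntiOn_one_div_two_mul_mul_sqrt.antitoneOn (half_pos hx) hu h.le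
  · exact (hasDerivAt_one_div_sqrt ((half_pos hx).trans (hpos s hs y hy))).comp_add_const y (φ s)

lemma strictAntiOn_integral_one_div_two_mul_mul_sqrt_add (hφ : Continuous φ)
    (hφ0 : ∀ s ∈ Icc a b, 0 ≤ φ s) (hab : a < b) :
    StrictAntiOn (fun x => ∫ s in a..b, 1 / (2 * ((x + φ s) * √(x + φ s)))) (Ioi 0) := by
  intro x (hx : 0 < x) y (hy : 0 < y) hxy
  have hlt : ∀ s ∈ Icc a b, 1 / (2 * ((y + φ s) * √(y + φ s)))
      < 1 / (2 * ((x + φ s) * √(x + φ s))) := fun s hs => by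
    have := hφ0 s hs
    exact strictAntiOn_one_div_two_mul_mul_sqrt (by simp only [mem_Ioi]; linarith)
      (by simp only [mem_Ioi]; linarith) (by linarith)
  exact intervalIntegral.integral_lt_integral_of_continuousOn_of_le_of_exists_lt hab
    (continuousOn_one_div_two_mul_mul_sqrt.comp_const_add_nonneg hφ hφ0 hy)
    (continuousOn_one_div_two_mul_mul_sqrt.comp_const_add_nonneg hφ hφ0 hx)
    (fun s hs => (hlt s (Ioc_subset_Icc_self hs)).le)
    ⟨a, left_mem_Icc.2 hab.le, hlt a (left_mem_Icc.2 hab.le)⟩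

lemma integral_one_div_two_mul_mul_sqrt_add_le {ψ : ℝ → ℝ} (hφ : Continuous φ)
    (hψ : Continuous ψ) (hψ0 : ∀ s ∈ Icc a b, 0 ≤ ψ s) (hψφ : ∀ s ∈ Icc a b, ψ s ≤ φ s)
    (hab : a ≤ b) {x : ℝ} (hx : 0 < x) :
    ∫ s in a..b, 1 / (2 * ((x + φ s) * √(x + φ s)))
      ≤ ∫ s in a..b, 1 / (2 * ((x + ψ s) * √(x + ψ s))) := by
  have hφ0 s hs : 0 ≤ φ s := (hψ0 s hs).trans (hψφ s hs)
  have hk := continuousOn_one_div_two_mul_mul_sqrt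
  refine intervalIntegral.integral_mono_on hab
    ((hk.comp_const_add_nonneg hφ hφ0 hx).intervalIntegrable_of_Icc hab)
    ((hk.comp_const_add_nonneg hψ hψ0 hx).intervalIntegrable_of_Icc hab) fun s hs => ?_
  have := hψ0 s hs
  have := hψφ s hs
  exact strictAntiOn_one_div_two_mul_mul_sqrt.antitoneOn (by simp only [mem_Ioi]; linarith)
    (by simp only [mem_Ioi]; linarith) (by linarith)

end ParametricIntegral

lemma integral_one_div_two_mul_mul_sqrt_add_mul_lt {c x m : ℝ} (hc : c < 0) (hx : 0 < x)
    (hm : 0 < m) :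
    ∫ s in (-m)..0, 1 / (2 * ((x + c * s) * √(x + c * s))) < 1 / (-c * √x) := by
  have hpos : ∀ s ∈ Icc (-m) 0, 0 < x + c * s := fun s hs => by nlinarith [hs.2]
  have hF : ∀ s ∈ uIcc (-m) 0, HasDerivAt (fun y => -(1 / c) * (1 / √(x + c * y)))
      (1 / (2 * ((x + c * s) * √(x + c * s)))) s := fun s hs => by
    rw [uIcc_of_le (by linarith)] at hs
    have h := ((hasDerivAt_one_div_sqrt (hpos s hs)).comp s
      (((hasDerivAt_id s).const_mul c).const_add x)).const_mul (-(1 / c))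
    refine h.congr_deriv ?_
    have := Real.sqrt_pos.2 (hpos s hs)
    have := (hpos s hs).ne'
    have := hc.ne
    field_simp
  rw [intervalIntegral.integral_eq_sub_of_hasDerivAt hF
    ((continuousOn_one_div_two_mul_mul_sqrt.comp_const_add_nonneg (φ := (c * ·)) (by fun_prop)
      (fun s hs => by nlinarith [hs.2]) hx).intervalIntegrable_of_Icc (by linarith))]
  have : 0 < -(1 / c) * (1 / √(x + c * -m)) := by
    have := Real.sqrt_pos.2 (hpos (-m) (left_mem_Icc.2 (by linarith)))
    have : 0 < -(1 / c) := by rw [neg_pos, one_div_neg]; exact hc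
    positivity
  simp only [mul_zero, add_zero]
  rw [show 1 / (-c * √x) = -(1 / c) * (1 / √x) by field_simp]
  linarith

noncomputable def totalHead (g m : ℝ) (Γ : ℝ → ℝ) (l : ℝ) : ℝ :=
  l / 2 + g * ∫ s in (-m)..0, 1 / √(l + 2 * Γ s)

section TotalHead

variable {g m : ℝ} {Γ : ℝ → ℝ}

lemma hasDerivAt_totalHead (hΓ : Continuous Γ) (hΓ0 : ∀ s ∈ Icc (-m) 0, 0 ≤ Γ s) (hm : 0 ≤ m)
    {l : ℝ} (hl : 0 < l) :
    HasDerivAt (totalHead g m Γ)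
      (1 / 2 - g * ∫ s in (-m)..0, 1 / (2 * ((l + 2 * Γ s) * √(l + 2 * Γ s)))) l :=
  (((hasDerivAt_id' l).div_const 2).add
    ((hasDerivAt_integral_one_div_sqrt_add (φ := fun s => 2 * Γ s) (by fun_prop)
      (fun s hs => mul_nonneg zero_le_two (hΓ0 s hs)) (by linarith) hl).const_mul g))
    |>.congr_deriv (by ring)

lemma strictMonoOn_deriv_totalHead (hg : 0 < g) (hm : 0 < m) (hΓ : Continuous Γ)
    (hΓ0 : ∀ s ∈ Icc (-m) 0, 0 ≤ Γ s) : StrictMonoOn (deriv (totalHead g m Γ)) (Ioi 0) := by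
  intro x (hx : 0 < x) y (hy : 0 < y) hxy
  rw [(hasDerivAt_totalHead hΓ hΓ0 hm.le hx).deriv,
    (hasDerivAt_totalHead hΓ hΓ0 hm.le hy).deriv]
  have := strictAntiOn_integral_one_div_two_mul_mul_sqrt_add (φ := fun s => 2 * Γ s)
    (by fun_prop) (fun s hs => mul_nonneg zero_le_two (hΓ0 s hs)) (neg_lt_zero.2 hm) hx hy hxy
  dsimp only at this
  nlinarith

lemma strictConvexOn_totalHead (hg : 0 < g) (hm : 0 < m) (hΓ : Continuous Γ)
    (hΓ0 : ∀ s ∈ Icc (-m) 0, 0 ≤ Γ s) : StrictConvexOn ℝ (Ioi 0) (totalHead g m Γ) :=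
  StrictMonoOn.strictConvexOn_of_deriv (convex_Ioi 0)
    (fun _ hl => (hasDerivAt_totalHead hΓ hΓ0 hm.le hl).continuousAt.continuousWithinAt)
    (by rw [interior_Ioi]; exact strictMonoOn_deriv_totalHead hg hm hΓ hΓ0)

lemma deriv_totalHead_pos {γ₀ : ℝ} (hg : 0 < g) (hm : 0 < m) (hγ₀ : γ₀ < 0)
    (hΓ : Continuous Γ) (hΓγ₀ : ∀ s ∈ Icc (-m) 0, γ₀ * s ≤ Γ s) :
    0 < deriv (totalHead g m Γ) (g ^ 2 / γ₀ ^ 2) := by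
  have hγ₀ne := hγ₀.ne
  have hL : 0 < g ^ 2 / γ₀ ^ 2 := by positivity
  have hlinear0 : ∀ s ∈ Icc (-m) 0, 0 ≤ γ₀ * s := fun s hs =>
    mul_nonneg_of_nonpos_of_nonpos hγ₀.le hs.2
  have hle := integral_one_div_two_mul_mul_sqrt_add_le (φ := fun s => 2 * Γ s)
    (ψ := fun s => 2 * γ₀ * s) (by fun_prop) (by fun_prop)
    (fun s hs => by linarith [hlinear0 s hs]) (fun s hs => by linarith [hΓγ₀ s hs])
    (neg_nonpos.2 hm.le) hL
  have hlt := integral_one_div_two_mul_mul_sqrt_add_mul_lt (by linarith : 2 * γ₀ < 0) hL hm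
  have hsqrtL : √(g ^ 2 / γ₀ ^ 2) = g / -γ₀ := by
    rw [← neg_sq γ₀, ← div_pow, Real.sqrt_sq (div_nonneg hg.le (by linarith))]
  rw [hsqrtL, show 1 / (-(2 * γ₀) * (g / -γ₀)) = 1 / (2 * g) by field_simp] at hlt
  have := mul_lt_mul_of_pos_left (hle.trans_lt hlt) hg
  rw [show g * (1 / (2 * g)) = 1 / 2 by field_simp] at this
  rw [(hasDerivAt_totalHead hΓ (fun s hs => (hlinear0 s hs).trans (hΓγ₀ s hs)) hm.le hL).deriv]
  linarith

end TotalHead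

/-- **The total head of trivial flows near the critical point.**  Let `g > 0`, `m > 0`,
`γ₀ < 0`, and let `Γ` be a `C²` convex function on `[-m, 0]` with `Γ 0 = 0` and
`Γ' 0 = γ₀` (the antiderivative of the vorticity function).  Then `Γ ≥ 0` on `[-m, 0]`;
the total head `Q̃(λ) = λ/2 + g ∫_{-m}^0 (λ + 2Γ(s))^{-1/2} ds` is well defined (the
integrand is interval integrable) and strictly convex on `(0, ∞)`; `Q̃'(g²/γ₀²) > 0`;
and consequently every critical point `λcr ∈ (0, ∞)` of `Q̃` satisfies
`γ₀² · λcr < g²`. -/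
theorem total_head_critical_point_bound
    (g m γ₀ : ℝ) (Γ : ℝ → ℝ)
    (hg : 0 < g) (hm : 0 < m) (hγ₀ : γ₀ < 0)
    (hΓ : ContDiff ℝ 2 Γ)
    (hconv : ∀ s ∈ Icc (-m) (0:ℝ), 0 ≤ deriv (deriv Γ) s)
    (hΓ0 : Γ 0 = 0) (hΓ'0 : deriv Γ 0 = γ₀) :
    (∀ s ∈ Icc (-m) (0:ℝ), 0 ≤ Γ s) ∧
    (∀ l : ℝ, 0 < l →
      IntervalIntegrable (fun s => 1 / Real.sqrt (l + 2 * Γ s))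
        MeasureTheory.volume (-m) 0) ∧
    StrictConvexOn ℝ (Ioi (0:ℝ))
      (fun l => l / 2 + g * ∫ s in (-m)..(0:ℝ), 1 / Real.sqrt (l + 2 * Γ s)) ∧
    (0 < deriv (fun l => l / 2 + g * ∫ s in (-m)..(0:ℝ), 1 / Real.sqrt (l + 2 * Γ s))
      (g ^ 2 / γ₀ ^ 2)) ∧
    (∀ lcr : ℝ, 0 < lcr →
      deriv (fun l => l / 2 + g * ∫ s in (-m)..(0:ℝ), 1 / Real.sqrt (l + 2 * Γ s)) lcr = 0 →
      γ₀ ^ 2 * lcr < g ^ 2) := by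
  have hΓconv : ConvexOn ℝ (Icc (-m) 0) Γ :=
    convexOn_of_contDiff_two_of_deriv2_nonneg (convex_Icc _ _) hΓ hconv
  have htangent : ∀ s ∈ Icc (-m) (0:ℝ), γ₀ * s ≤ Γ s := fun s hs => by
    have := hΓconv.apply_add_deriv_mul_sub_le (right_mem_Icc.2 (neg_nonpos.2 hm.le)) hs
      (hΓ.differentiable two_ne_zero 0)
    rwa [hΓ0, hΓ'0, zero_add, sub_zero] at this
  have hΓnn : ∀ s ∈ Icc (-m) (0:ℝ), 0 ≤ Γ s := fun s hs =>
    (mul_nonneg_of_nonpos_of_nonpos hγ₀.le hs.2).trans (htangent s hs)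
  have hγ₀ne := hγ₀.ne
  have hL : 0 < g ^ 2 / γ₀ ^ 2 := by positivity
  have hQL := deriv_totalHead_pos hg hm hγ₀ hΓ.continuous htangent
  refine ⟨hΓnn, fun l hl => ?_, strictConvexOn_totalHead hg hm hΓ.continuous hΓnn, hQL,
    fun lcr hlcr hcrit => ?_⟩
  · exact (continuousOn_one_div_sqrt.comp_const_add_nonneg (φ := fun s => 2 * Γ s)
      (by fun_prop) (fun s hs => mul_nonneg zero_le_two (hΓnn s hs)) hl)
      |>.intervalIntegrable_of_Icc (neg_nonpos.2 hm.le)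
  · have hlt : lcr < g ^ 2 / γ₀ ^ 2 :=
      ((strictMonoOn_deriv_totalHead hg hm hΓ.continuous hΓnn).lt_iff_lt hlcr hL).1
        (hcrit ▸ hQL)
    rwa [lt_div_iff₀ (by positivity), mul_comm] at hlt
end
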